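/- arXiv:1811.02888 — 5 statements merged into one kernel-verified Lean document; each statement's English description precedes it below -/
import Mathlib

section
/- Let K be a compact Hausdorff topological space, let M and N be Hausdorff topological spaces with M regular, and let f : M → N be a local homeomorphism. Then the pushforward map C(K,f) : C(K,M) → C(K,N), γ ↦ f ∘ γ, between the spaces of continuous maps equipped with the compact-open topology, is a local homeomorphism. -/
/-!
Cover the compact space `K` by finitely many closed sets `C i` such that `γ₀` maps `C i` into
the source of a chart `e i` of `f`. Near `f ∘ γ₀`, a map `δ` is lifted by applying `(e i).symm`
on `C i`. The condition `δ (C i ∩ C j) ⊆ f ((e i).source ∩ (e j).source)` is open in the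
compact-open topology and makes these local lifts agree on overlaps, so they glue along the
finite closed cover to a continuous local inverse of `γ ↦ f ∘ γ`.
-/

open Set Topology

section ChartLift

variable {K M N ι : Type*} [TopologicalSpace K] [TopologicalSpace M] [TopologicalSpace N]
  {f : C(M, N)} {C : ι → Set K} {e : ι → OpenPartialHomeomorph M N} {idx : K → ι}

def liftDomain (C : ι → Set K) (e : ι → OpenPartialHomeomorph M N) : Set C(K, M) :=
  {γ | ∀ i, MapsTo γ (C i) (e i).source}

def liftCodomain (f : C(M, N)) (C : ι → Set K) (e : ι → OpenPartialHomeomorph M N) :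
    Set C(K, N) :=
  {δ | ∀ i j, MapsTo δ (C i ∩ C j) (f '' ((e i).source ∩ (e j).source))}

def chartLift (e : ι → OpenPartialHomeomorph M N) (idx : K → ι) (δ : K → N) : K → M :=
  fun x => (e (idx x)).symm (δ x)

theorem chartLift_spec (hfe : ∀ i, ⇑f = e i) (hidx : ∀ x, x ∈ C (idx x)) {δ : C(K, N)}
    (hδ : δ ∈ liftCodomain f C e) {x : K} {i : ι} (hx : x ∈ C i) :
    chartLift e idx δ x ∈ (e i).source ∧ (e i).symm (δ x) = chartLift e idx δ x ∧
      f (chartLift e idx δ x) = δ x := by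
  obtain ⟨m, ⟨hmi, hmx⟩, hm⟩ := hδ i (idx x) ⟨hx, hidx x⟩
  have symm_eq : ∀ j, m ∈ (e j).source → (e j).symm (δ x) = m := fun j hmj => by
    rw [← hm, hfe j]; exact (e j).left_inv hmj
  rw [show chartLift e idx δ x = m from symm_eq _ hmx, symm_eq _ hmi]
  exact ⟨hmi, rfl, hm⟩

theorem continuous_chartLift [Finite ι] (hC : ∀ i, IsClosed (C i)) (hfe : ∀ i, ⇑f = e i)
    (hidx : ∀ x, x ∈ C (idx x)) {δ : C(K, N)} (hδ : δ ∈ liftCodomain f C e) :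
    Continuous (chartLift e idx δ) := by
  refine (locallyFinite_of_finite C).continuous
    (eq_univ_of_forall fun x => mem_iUnion.2 ⟨idx x, hidx x⟩) hC fun i => ?_
  have hmaps : MapsTo δ (C i) (e i).target := fun x hx => by
    obtain ⟨hsource, -, happly⟩ := chartLift_spec hfe hidx hδ hx
    rw [← happly, hfe i]
    exact (e i).map_source hsource
  exact ((e i).continuousOn_symm.comp δ.continuous.continuousOn hmaps).congr fun x hx =>
    (chartLift_spec hfe hidx hδ hx).2.1.symm

theorem mapsTo_chartLift_iff (hfe : ∀ i, ⇑f = e i) (hidx : ∀ x, x ∈ C (idx x))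
    {δ : C(K, N)} (hδ : δ ∈ liftCodomain f C e) {Q : Set K} {V : Set M} :
    MapsTo (chartLift e idx δ) Q V ↔ ∀ i, MapsTo δ (Q ∩ C i) (f '' (V ∩ (e i).source)) := by
  refine ⟨fun h i x hx => ?_, fun h x hx => ?_⟩
  · have hlift := chartLift_spec hfe hidx hδ hx.2
    exact ⟨_, ⟨h hx.1, hlift.1⟩, hlift.2.2⟩
  · obtain ⟨m, ⟨hmV, hmx⟩, hm⟩ := h (idx x) ⟨hx, hidx x⟩
    have : chartLift e idx δ x = m := by
      rw [chartLift, ← hm, hfe]; exact (e (idx x)).left_inv hmx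
    exact this ▸ hmV

theorem isOpen_liftDomain [Finite ι] (hC : ∀ i, IsCompact (C i)) :
    IsOpen (liftDomain C e) := by
  rw [liftDomain, ofPred_forall]
  exact isOpen_iInter_of_finite fun i =>
    ContinuousMap.isOpen_setOfPred_mapsTo (hC i) (e i).open_source

theorem isOpen_liftCodomain [Finite ι] (hf : IsOpenMap f) (hCc : ∀ i, IsCompact (C i))
    (hC : ∀ i, IsClosed (C i)) : IsOpen (liftCodomain f C e) := by
  simp only [liftCodomain, ofPred_forall]
  exact isOpen_iInter_of_finite fun i => isOpen_iInter_of_finite fun j =>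
    ContinuousMap.isOpen_setOfPred_mapsTo ((hCc i).inter_right (hC j))
      (hf _ ((e i).open_source.inter (e j).open_source))

theorem comp_mem_liftCodomain {γ : C(K, M)} (hγ : γ ∈ liftDomain C e) :
    f.comp γ ∈ liftCodomain f C e :=
  fun i j x hx => ⟨γ x, ⟨hγ i hx.1, hγ j hx.2⟩, rfl⟩

theorem isOpen_setOf_mapsTo_chartLift [Finite ι] (hf : IsOpenMap f) (hC : ∀ i, IsClosed (C i))
    (hfe : ∀ i, ⇑f = e i) (hidx : ∀ x, x ∈ C (idx x)) {Q : Set K} (hQ : IsCompact Q)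
    {V : Set M} (hV : IsOpen V) :
    IsOpen {δ : liftCodomain f C e | MapsTo (chartLift e idx δ) Q V} := by
  have hpre : {δ : liftCodomain f C e | MapsTo (chartLift e idx δ) Q V} =
      Subtype.val ⁻¹' ⋂ i, {δ : C(K, N) | MapsTo δ (Q ∩ C i) (f '' (V ∩ (e i).source))} := by
    ext δ
    simp only [mem_ofPred_eq, mem_preimage, mem_iInter]
    exact mapsTo_chartLift_iff hfe hidx δ.2
  rw [hpre]
  exact (isOpen_iInter_of_finite fun i => ContinuousMap.isOpen_setOfPred_mapsTo
    (hQ.inter_right (hC i)) (hf _ (hV.inter (e i).open_source))).preimage continuous_subtype_val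

def compHomeomorph [Finite ι] (hf : IsOpenMap f) (hC : ∀ i, IsClosed (C i))
    (hfe : ∀ i, ⇑f = e i) (hidx : ∀ x, x ∈ C (idx x)) :
    liftDomain C e ≃ₜ liftCodomain f C e where
  toFun γ := ⟨f.comp γ, comp_mem_liftCodomain γ.2⟩
  invFun δ := ⟨⟨chartLift e idx δ, continuous_chartLift hC hfe hidx δ.2⟩,
    fun _ _ hx => (chartLift_spec hfe hidx δ.2 hx).1⟩
  left_inv γ := Subtype.ext <| ContinuousMap.ext fun x => by
    change (e (idx x)).symm (f (γ.1 x)) = γ.1 x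
    rw [hfe]
    exact (e (idx x)).left_inv (γ.2 _ (hidx x))
  right_inv δ := Subtype.ext <| ContinuousMap.ext fun x =>
    (chartLift_spec hfe hidx δ.2 (hidx x)).2.2
  continuous_toFun :=
    ((ContinuousMap.continuous_postcomp f).comp continuous_subtype_val).subtype_mk _
  continuous_invFun := (ContinuousMap.continuous_compactOpen.2 fun _ hQ _ hV =>
    isOpen_setOf_mapsTo_chartLift hf hC hfe hidx hQ hV).subtype_mk _

theorem isOpenEmbedding_domRestrict_liftDomain [Finite ι] (hf : IsOpenMap f)
    (hCc : ∀ i, IsCompact (C i)) (hC : ∀ i, IsClosed (C i)) (hfe : ∀ i, ⇑f = e i)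
    (hidx : ∀ x, x ∈ C (idx x)) :
    IsOpenEmbedding ((liftDomain C e).domRestrict fun γ => f.comp γ) :=
  (isOpen_liftCodomain hf hCc hC).isOpenEmbedding_subtypeVal.comp
    (compHomeomorph hf hC hfe hidx).isOpenEmbedding

theorem exists_finite_chartCover [CompactSpace K] [RegularSpace K]
    (hf : IsLocalHomeomorph f) (γ : C(K, M)) :
    ∃ (t : Finset K) (C : t → Set K) (e : t → OpenPartialHomeomorph M N) (idx : K → t),
      (∀ i, IsClosed (C i)) ∧ (∀ i, ⇑f = e i) ∧ (∀ x, x ∈ C (idx x)) ∧ γ ∈ liftDomain C e := by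
  choose e hγe hfe using fun x => hf (γ x)
  choose C hCx hC hCe using fun x => exists_mem_nhds_isClosed_subset
    (((e x).open_source.preimage γ.continuous).mem_nhds (hγe x))
  obtain ⟨t, ht⟩ := finite_cover_nhds hCx
  have hcover : ∀ y, ∃ i : t, y ∈ C i := fun y => by
    obtain ⟨i, hi, hy⟩ := mem_iUnion₂.1 (ht ▸ mem_univ y)
    exact ⟨⟨i, hi⟩, hy⟩
  choose idx hidx using hcover
  exact ⟨t, fun i => C i, fun i => e i, idx, fun i => hC i, fun i => hfe i, hidx,
    fun i => hCe i⟩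

end ChartLift

theorem isLocalHomeomorph_compContinuousMap_general
    {K M N : Type*} [TopologicalSpace K] [CompactSpace K] [T2Space K]
    [TopologicalSpace M]
    [TopologicalSpace N]
    (f : M → N) (hf : IsLocalHomeomorph f) :
    IsLocalHomeomorph
      (fun γ : C(K, M) => (⟨f, hf.continuous⟩ : C(M, N)).comp γ) := by
  refine isLocalHomeomorph_iff_isOpenEmbedding_restrict.2 fun γ => ?_
  obtain ⟨t, C, e, idx, hC, hfe, hidx, hγ⟩ :=
    exists_finite_chartCover (f := ⟨f, hf.continuous⟩) hf γ
  have hCc : ∀ i, IsCompact (C i) := fun i => (hC i).isCompact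
  exact ⟨_, (isOpen_liftDomain hCc).mem_nhds hγ,
    isOpenEmbedding_domRestrict_liftDomain hf.isOpenMap hCc hC hfe hidx⟩

/-- Let `K` be a compact Hausdorff topological space, `M` and `N` Hausdorff topological
spaces with `M` regular, and `f : M → N` a local homeomorphism. Then the pushforward
`C(K, M) → C(K, N)`, `γ ↦ f ∘ γ` (with the compact-open topologies), is a local
homeomorphism. -/
theorem isLocalHomeomorph_compContinuousMap
    {K M N : Type*} [TopologicalSpace K] [CompactSpace K] [T2Space K]
    [TopologicalSpace M] [T2Space M] [RegularSpace M]
    [TopologicalSpace N] [T2Space N]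
    (f : M → N) (hf : IsLocalHomeomorph f) :
    IsLocalHomeomorph
      (fun γ : C(K, M) => (⟨f, hf.continuous⟩ : C(M, N)).comp γ) :=
  isLocalHomeomorph_compContinuousMap_general f hf
end

section
/- Let K be a compact, locally connected Hausdorff topological space. Let X, Y, and Z be Hausdorff topological spaces with X regular, let α : X → Y be a local homeomorphism, and let β : X → Z be a continuous map such that (α,β) : X → Y × Z, x ↦ (α(x), β(x)), is a proper map. Then the map g : C(K,X) → C(K,Y) × C(K,Z), γ ↦ (α ∘ γ, β ∘ γ), between spaces of continuous maps with the compact-open topology, is proper: the preimage under g of every compact subset of C(K,Y) × C(K,Z) is compact. -/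
open Set Filter Topology

/-- Let `K` be a compact, locally connected Hausdorff space, `X`, `Y`, `Z` Hausdorff spaces
with `X` regular, `α : X → Y` a local homeomorphism and `β : X → Z` a continuous map such
that `(α, β) : X → Y × Z` is proper. Then `g : C(K, X) → C(K, Y) × C(K, Z)`,
`γ ↦ (α ∘ γ, β ∘ γ)`, is proper: preimages of compact sets are compact. -/
theorem isCompact_preimage_comp_pair
    {K X Y Z : Type*}
    [TopologicalSpace K] [CompactSpace K] [LocallyConnectedSpace K] [T2Space K]
    [TopologicalSpace X] [T2Space X] [RegularSpace X]
    [TopologicalSpace Y] [T2Space Y] [TopologicalSpace Z] [T2Space Z]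
    (α : X → Y) (hα : IsLocalHomeomorph α)
    (β : X → Z) (hβ : Continuous β)
    (hprop : ∀ C : Set (Y × Z), IsCompact C →
      IsCompact ((fun x : X => (α x, β x)) ⁻¹' C)) :
    ∀ L : Set (C(K, Y) × C(K, Z)), IsCompact L →
      IsCompact ((fun γ : C(K, X) =>
        ((⟨α, hα.continuous⟩ : C(X, Y)).comp γ,
         (⟨β, hβ⟩ : C(X, Z)).comp γ)) ⁻¹' L) := by
  intro L hL
  set f : X → Y × Z := fun x => (α x, β x) with hfdef
  have hfc : Continuous f := hα.continuous.prodMk hβ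
  set g : C(K, X) → C(K, Y) × C(K, Z) := fun γ =>
    ((⟨α, hα.continuous⟩ : C(X, Y)).comp γ, (⟨β, hβ⟩ : C(X, Z)).comp γ) with hgdef
  rw [isCompact_iff_ultrafilter_le_nhds]
  intro F hF
  have hSF : g ⁻¹' L ∈ F := le_principal_iff.mp hF
  -- the limit (u, v) of g along F
  have hgL : ↑(F.map g) ≤ 𝓟 L := by
    rw [Ultrafilter.coe_map, le_principal_iff, mem_map]
    exact Filter.mem_of_superset hSF (fun γ h => h)
  obtain ⟨⟨u, v⟩, hPL, hP⟩ := hL.ultrafilter_le_nhds (F.map g) hgL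
  have hgT : Tendsto g (F : Filter C(K, X)) (𝓝 (u, v)) := by
    rwa [Tendsto, ← Ultrafilter.coe_map]
  have hu : Tendsto (fun γ : C(K, X) => (g γ).1) (F : Filter C(K, X)) (𝓝 u) :=
    (continuous_fst.tendsto _).comp hgT
  -- pointwise limits
  have hxex : ∀ k : K, ∃ x' : X, Tendsto (fun γ : C(K, X) => γ k) (F : Filter C(K, X)) (𝓝 x') := by
    intro k
    have hev : Continuous fun p : C(K, Y) × C(K, Z) => (p.1 k, p.2 k) :=
      ((continuous_eval_const k).comp continuous_fst).prodMk
        ((continuous_eval_const k).comp continuous_snd)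
    have hQ : IsCompact (f ⁻¹' ((fun p : C(K, Y) × C(K, Z) => (p.1 k, p.2 k)) '' L)) :=
      hprop _ (hL.image hev)
    have hle : ↑(F.map (fun γ : C(K, X) => γ k)) ≤
        𝓟 (f ⁻¹' ((fun p : C(K, Y) × C(K, Z) => (p.1 k, p.2 k)) '' L)) := by
      rw [Ultrafilter.coe_map, le_principal_iff, mem_map]
      refine Filter.mem_of_superset hSF ?_
      intro γ hγ
      exact ⟨g γ, hγ, rfl⟩
    obtain ⟨x', -, hx'⟩ := hQ.ultrafilter_le_nhds (F.map (fun γ : C(K, X) => γ k)) hle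
    exact ⟨x', by rwa [Tendsto, ← Ultrafilter.coe_map]⟩
  choose x hx using hxex
  -- f (x k) = (u k, v k)
  have hfx : ∀ k : K, f (x k) = (u k, v k) := by
    intro k
    have h1 : Tendsto (fun γ : C(K, X) => f (γ k)) (F : Filter C(K, X)) (𝓝 (f (x k))) :=
      (hfc.tendsto _).comp (hx k)
    have hev : Continuous fun p : C(K, Y) × C(K, Z) => (p.1 k, p.2 k) :=
      ((continuous_eval_const k).comp continuous_fst).prodMk
        ((continuous_eval_const k).comp continuous_snd)
    have h2 : Tendsto (fun γ : C(K, X) => f (γ k)) (F : Filter C(K, X)) (𝓝 (u k, v k)) :=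
      (hev.tendsto _).comp hgT
    exact tendsto_nhds_unique h1 h2
  have hux : ∀ k : K, u k = α (x k) := fun k => (congrArg Prod.fst (hfx k)).symm
  -- the key local lemma
  have key : ∀ (k : K) (O : Set X), IsOpen O → x k ∈ O →
      ∃ (e : OpenPartialHomeomorph X Y) (W : Set K), IsOpen W ∧ k ∈ W ∧ e.source ⊆ O ∧
        (∀ w ∈ W, u w ∈ e.target ∧ x w = e.symm (u w)) ∧
        ∀ᶠ γ : C(K, X) in (F : Filter C(K, X)), ∀ w ∈ W, γ w ∈ e.source := by
    intro k O hO hxkO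
    obtain ⟨e₀, he₀, hαe₀⟩ := hα (x k)
    set e := e₀.restrOpen O hO with he
    have hesrc : e.source = e₀.source ∩ O := e₀.restrOpen_source O hO
    have hαe : ∀ x' : X, α x' = e x' := fun x' => congrFun hαe₀ x'
    have hke : x k ∈ e.source := hesrc ▸ ⟨he₀, hxkO⟩
    have huk : u k ∈ e.target := by
      rw [hux k, hαe]
      exact e.map_source hke
    have hW0 : IsOpen (u ⁻¹' e.target) := e.open_target.preimage u.continuous
    obtain ⟨t, htk, htc, hts⟩ :=
      exists_mem_nhds_isClosed_subset (hW0.mem_nhds (show k ∈ u ⁻¹' e.target from huk))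
    obtain ⟨W, hWt, hWo, hkW, hWconn⟩ :=
      locallyConnectedSpace_iff_subsets_isOpen_isConnected.mp ‹LocallyConnectedSpace K› k
        (interior t) (isOpen_interior.mem_nhds (mem_interior_iff_mem_nhds.mpr htk))
    have hclW0 : closure W ⊆ u ⁻¹' e.target := by
      refine subset_trans ?_ hts
      calc closure W ⊆ closure (interior t) := closure_mono hWt
        _ ⊆ closure t := closure_mono interior_subset
        _ = t := htc.closure_eq
    have hclcomp : IsCompact (closure W) := isClosed_closure.isCompact
    have hclconn : IsPreconnected (closure W) := hWconn.isPreconnected.closure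
    have E1 : ∀ᶠ γ : C(K, X) in (F : Filter C(K, X)), γ k ∈ e.source :=
      (hx k).eventually (e.open_source.eventually_mem hke)
    have E2 : ∀ᶠ γ : C(K, X) in (F : Filter C(K, X)), MapsTo ((g γ).1) (closure W) e.target := by
      have hop : IsOpen {h : C(K, Y) | MapsTo h (closure W) e.target} :=
        ContinuousMap.isOpen_setOf_mapsTo hclcomp e.open_target
      exact hu.eventually_mem (hop.mem_nhds (fun w hw => hclW0 hw))
    have E3 : ∀ᶠ γ : C(K, X) in (F : Filter C(K, X)), ∀ w ∈ closure W, γ w ∈ e.source := by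
      filter_upwards [E1, E2] with γ h1 h2
      haveI : PreconnectedSpace (closure W) := Subtype.preconnectedSpace hclconn
      have h2' : ∀ w : closure W, α (γ ↑w) ∈ e.target := by
        intro w
        have := h2 w.2
        exact this
      set A : Set (closure W) := {w | γ ↑w ∈ e.source} with hA
      have hAopen : IsOpen A :=
        e.open_source.preimage (γ.continuous.comp continuous_subtype_val)
      have hcont2 : Continuous fun w : closure W => e.symm (α (γ ↑w)) := by
        refine ContinuousOn.comp_continuous e.continuousOn_symm
          ((hα.continuous.comp γ.continuous).comp continuous_subtype_val) h2'
      have hAeq : A = {w : closure W | γ ↑w = e.symm (α (γ ↑w))} := by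
        ext w
        simp only [hA, mem_setOf_eq]
        constructor
        · intro hw
          conv_lhs => rw [← e.left_inv hw]
          rw [hαe]
        · intro hw
          rw [hw]
          exact e.map_target (h2' w)
      have hAclosed : IsClosed A := by
        rw [hAeq]
        exact isClosed_eq (γ.continuous.comp continuous_subtype_val) hcont2
      have hAuniv : A = univ :=
        IsClopen.eq_univ ⟨hAclosed, hAopen⟩ ⟨⟨k, subset_closure hkW⟩, h1⟩
      intro w hw
      have : (⟨w, hw⟩ : closure W) ∈ A := hAuniv ▸ mem_univ _
      exact this
    have hxw : ∀ w ∈ closure W, u w ∈ e.target ∧ x w = e.symm (u w) := by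
      intro w hw
      have huw : u w ∈ e.target := hclW0 hw
      refine ⟨huw, ?_⟩
      have t0 : Tendsto (fun γ : C(K, X) => (g γ).1 w) (F : Filter C(K, X)) (𝓝 (u w)) :=
        ((continuous_eval_const w).tendsto u).comp hu
      have t1 : Tendsto (fun γ : C(K, X) => e.symm ((g γ).1 w)) (F : Filter C(K, X))
          (𝓝 (e.symm (u w))) :=
        ((e.continuousOn_symm.continuousAt (e.open_target.mem_nhds huw)).tendsto).comp t0
      have t2 : Tendsto (fun γ : C(K, X) => γ w) (F : Filter C(K, X)) (𝓝 (e.symm (u w))) := by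
        refine t1.congr' ?_
        filter_upwards [E3] with γ h3
        have hin := h3 w hw
        show e.symm ((g γ).1 w) = γ w
        have h4 : (g γ).1 w = e (γ w) := by
          show α (γ w) = e (γ w)
          rw [hαe]
        rw [h4, e.left_inv hin]
      exact tendsto_nhds_unique (hx w) t2
    exact ⟨e, W, hWo, hkW, hesrc ▸ inter_subset_right,
      fun w hw => hxw w (subset_closure hw),
      E3.mono (fun γ h w hw => h w (subset_closure hw))⟩
  -- continuity of the pointwise limit
  have hxc : Continuous x := by
    rw [continuous_iff_continuousAt]
    intro k
    obtain ⟨e, W, hWo, hkW, -, hW, -⟩ := key k univ isOpen_univ (mem_univ _)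
    have hca : ContinuousAt (fun w => e.symm (u w)) k :=
      (e.continuousOn_symm.continuousAt (e.open_target.mem_nhds (hW k hkW).1)).comp
        u.continuous.continuousAt
    refine hca.congr ?_
    exact Filter.eventuallyEq_of_mem (hWo.mem_nhds hkW) (fun w hw => ((hW w hw).2).symm)
  refine ⟨⟨x, hxc⟩, ?_, ?_⟩
  · show g ⟨x, hxc⟩ ∈ L
    have hgx : g ⟨x, hxc⟩ = (u, v) := by
      refine Prod.ext ?_ ?_
      · exact ContinuousMap.ext fun k => congrArg Prod.fst (hfx k)
      · exact ContinuousMap.ext fun k => congrArg Prod.snd (hfx k)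
    rw [hgx]; exact hPL
  · have : Tendsto (id : C(K, X) → C(K, X)) (F : Filter C(K, X)) (𝓝 ⟨x, hxc⟩) := by
      rw [ContinuousMap.tendsto_nhds_compactOpen]
      intro C hC O hO hmaps
      choose e W hWo hkW hsub hWx hev using fun k : C => key k O hO (hmaps k.2)
      obtain ⟨s, hs⟩ := hC.elim_finite_subcover (fun k : C => W k) (fun k => hWo k)
        (fun w hw => mem_iUnion.mpr ⟨⟨w, hw⟩, hkW ⟨w, hw⟩⟩)
      have hall := (eventually_all_finite s.finite_toSet).mpr (fun i _ => hev i)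
      filter_upwards [hall] with γ h w hw
      obtain ⟨i, hi, hwi⟩ := mem_iUnion₂.mp (hs hw)
      exact hsub i (h i hi w hwi)
    exact this
end

section
/- Let S be a Hausdorff topological space which is a k-space (compactly generated) and which admits a family (K_i)_{i∈I} of compact subsets covering S such that each K_i is locally connected in its subspace topology and such that every compact subset of S is contained in a finite union ⋃_{i∈Φ} K_i for some finite Φ ⊆ I. Let X, Y, and Z be Hausdorff topological spaces with X regular, let α : X → Y be a local homeomorphism, and let β : X → Z be a continuous map such that (α,β) : X → Y × Z is a proper map. Then the map g : C(S,X) → C(S,Y) × C(S,Z), γ ↦ (α ∘ γ, β ∘ γ), between spaces of continuous maps with the compact-open topology, is proper: the preimage under g of every compact subset of C(S,Y) × C(S,Z) is compact. -/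
/-!
Take an ultrafilter `𝒰` on the preimage of a compact set `L`. Its image converges to some
`(f, h) ∈ L`, and properness of `(α, β)` makes `𝒰` converge pointwise to some `γ₀ : S → X`.
On a locally connected piece `Ks i` the convergence is even joint in `(γ, s)`: choose an open
`W ∋ γ₀ s₀` whose closure lies in a chart `e` of `α`, and a connected neighbourhood `N` of
`s₀` on which `α ∘ γ` eventually stays in `e '' W`. The connected set `γ '' N` meets `W` and
cannot cross the frontier of `W`, so `γ '' N ⊆ W` and `γ = e.symm ∘ (α ∘ γ)` on `N`.
Joint convergence yields continuity of `γ₀` and compact-open convergence on each `Ks i`; the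
k-space property and the cofinality of the `Ks i` glue these over `S`.
-/

open Set Filter Topology

theorem OpenPartialHomeomorph.subset_of_isPreconnected {X Y : Type*} [TopologicalSpace X]
    [TopologicalSpace Y] (e : OpenPartialHomeomorph X Y) {W T : Set X} (hW : IsOpen W)
    (hWe : closure W ⊆ e.source) (hT : IsPreconnected T) (hTW : (T ∩ W).Nonempty)
    (hTe : MapsTo e T (e '' W)) : T ⊆ W := by
  have hW_eq : e ⁻¹' (e '' W) ∩ e.source = W :=
    e.injOn.preimage_image_inter (subset_closure.trans hWe)
  refine hT.subset_left_of_subset_union hW isClosed_closure.isOpen_compl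
    (disjoint_compl_right.mono_left subset_closure) (fun x hx => ?_) hTW
  by_cases hxW : x ∈ closure W
  · exact Or.inl (hW_eq ▸ ⟨hTe hx, hWe hxW⟩)
  · exact Or.inr hxW

theorem IsLocalHomeomorph.tendsto_uncurry_of_tendsto_comp {ι K X Y : Type*}
    [TopologicalSpace K] [LocallyConnectedSpace K] [TopologicalSpace X] [RegularSpace X]
    [TopologicalSpace Y] {α : X → Y} (hα : IsLocalHomeomorph α) {l : Filter ι}
    {F : ι → C(K, X)} {s₀ : K} {x₀ : X} (hpt : Tendsto (fun a => F a s₀) l (𝓝 x₀))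
    (hcomp : Tendsto (fun p : ι × K => α (F p.1 p.2)) (l ×ˢ 𝓝 s₀) (𝓝 (α x₀))) :
    Tendsto (fun p : ι × K => F p.1 p.2) (l ×ˢ 𝓝 s₀) (𝓝 x₀) := by
  obtain ⟨e, hx₀, rfl⟩ := hα x₀
  obtain ⟨W, hW, hx₀W, hWe⟩ := (isCompact_singleton (x := x₀)).exists_isOpen_closure_subset
    (by rw [nhdsSet_singleton]; exact e.open_source.mem_nhds hx₀)
  have hWs : W ⊆ e.source := subset_closure.trans hWe
  have heW : e '' W ∈ 𝓝 (e x₀) :=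
    (e.isOpen_image_of_subset_source hW hWs).mem_nhds (mem_image_of_mem e (hx₀W rfl))
  obtain ⟨A, hA, D, hD, hAD⟩ := mem_prod_iff.1 (hcomp heW)
  obtain ⟨N, ⟨hN, hs₀N, hNconn⟩, hND⟩ :=
    (LocallyConnectedSpace.open_connected_basis s₀).mem_iff.1 hD
  have hNW : ∀ᶠ a in l, MapsTo (F a) N W := by
    filter_upwards [hA, hpt (hW.mem_nhds (hx₀W rfl))] with a ha has₀
    refine mapsTo_iff_image_subset.2 (e.subset_of_isPreconnected hW hWe
      (hNconn.isPreconnected.image _ (F a).continuous.continuousOn)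
      ⟨_, mem_image_of_mem _ hs₀N, has₀⟩ ?_)
    rintro _ ⟨s, hs, rfl⟩
    exact hAD (mk_mem_prod ha (hND hs))
  have hsource : ∀ᶠ p : ι × K in l ×ˢ 𝓝 s₀, F p.1 p.2 ∈ e.source :=
    (hNW.prod_mk (hN.mem_nhds hs₀N)).mono fun p hp => hWs (hp.1 hp.2)
  have hsymm := (e.continuousAt_symm (e.map_source hx₀)).tendsto.comp hcomp
  rw [e.left_inv hx₀] at hsymm
  exact hsymm.congr' (hsource.mono fun p hp => e.left_inv hp)

theorem continuous_of_tendsto_uncurry {ι K X : Type*} [TopologicalSpace K]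
    [TopologicalSpace X] [RegularSpace X] {l : Filter ι} [l.NeBot] {F : ι → K → X}
    {γ : K → X} (h : ∀ s, Tendsto (fun p : ι × K => F p.1 p.2) (l ×ˢ 𝓝 s) (𝓝 (γ s))) :
    Continuous γ := by
  have hpt : ∀ s, Tendsto (fun a => F a s) l (𝓝 (γ s)) := fun s =>
    (h s).comp (tendsto_id.prodMk tendsto_const_nhds)
  refine continuous_iff_continuousAt.2 fun s₀ =>
    (closed_nhds_basis (γ s₀)).tendsto_right_iff.2 fun V ⟨hV, hVc⟩ => ?_
  obtain ⟨A, hA, D, hD, hAD⟩ := mem_prod_iff.1 (h s₀ hV)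
  filter_upwards [hD] with s hs
  exact hVc.mem_of_tendsto (hpt s) (mem_of_superset hA fun a ha => hAD (mk_mem_prod ha hs))

theorem ContinuousMap.tendsto_nhds_of_tendsto_uncurry {ι K X : Type*} [TopologicalSpace K]
    [TopologicalSpace X] {l : Filter ι} {F : ι → C(K, X)} {f : C(K, X)}
    (h : ∀ s, Tendsto (fun p : ι × K => F p.1 p.2) (l ×ˢ 𝓝 s) (𝓝 (f s))) :
    Tendsto F l (𝓝 f) := by
  refine tendsto_nhds_compactOpen.2 fun C hC O hO hfCO => ?_
  obtain ⟨A, hA, U, hU, hAU⟩ := mem_prod_iff.1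
    (hC.mem_prod_nhdsSet_of_forall fun s hs => h s (hO.mem_nhds (hfCO hs)))
  filter_upwards [hA] with a ha s hs using hAU (mk_mem_prod ha (subset_of_mem_nhdsSet hU hs))

section ClosedCover

variable {κ S X : Type*} [TopologicalSpace S] [TopologicalSpace X] {D : κ → Set S}

theorem continuous_of_forall_continuousOn_of_kspace [T2Space S]
    (hk : ∀ A : Set S, (∀ K : Set S, IsCompact K → IsClosed (A ∩ K)) → IsClosed A)
    (hD : ∀ i, IsClosed (D i))
    (hcof : ∀ K : Set S, IsCompact K → ∃ Φ : Finset κ, K ⊆ ⋃ i ∈ Φ, D i)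
    {γ : S → X} (hγ : ∀ i, ContinuousOn γ (D i)) : Continuous γ := by
  refine continuous_iff_isClosed.2 fun F hF => hk _ fun K hK => ?_
  obtain ⟨Φ, hΦ⟩ := hcof K hK
  have hK_eq : γ ⁻¹' F ∩ K = (⋃ i ∈ Φ, D i ∩ γ ⁻¹' F) ∩ K := by
    ext s
    simp only [mem_inter_iff, mem_iUnion, exists_prop]
    exact ⟨fun ⟨hsF, hsK⟩ =>
      ⟨(mem_iUnion₂.1 (hΦ hsK)).imp fun i ⟨hi, hs⟩ => ⟨hi, hs, hsF⟩, hsK⟩,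
      fun ⟨⟨_, _, _, hsF⟩, hsK⟩ => ⟨hsF, hsK⟩⟩
  rw [hK_eq]
  exact (Φ.finite_toSet.isClosed_biUnion fun i _ =>
    (hγ i).preimage_isClosed_of_isClosed (hD i) hF).inter hK.isClosed

theorem ContinuousMap.tendsto_nhds_of_tendsto_restrict (hD : ∀ i, IsClosed (D i))
    (hcof : ∀ K : Set S, IsCompact K → ∃ Φ : Finset κ, K ⊆ ⋃ i ∈ Φ, D i)
    {ι : Type*} {l : Filter ι} {F : ι → C(S, X)} {f : C(S, X)}
    (h : ∀ i, Tendsto (fun a => (F a).restrict (D i)) l (𝓝 (f.restrict (D i)))) :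
    Tendsto F l (𝓝 f) := by
  refine tendsto_nhds_compactOpen.2 fun C hC O hO hfCO => ?_
  obtain ⟨Φ, hΦ⟩ := hcof C hC
  have hpiece : ∀ i, ∀ᶠ a in l, MapsTo (F a) (C ∩ D i) O := fun i =>
    ((h i).eventually (eventually_mapsTo
      ((hD i).isClosedEmbedding_subtypeVal.isCompact_preimage hC) hO fun _ hs => hfCO hs)).mono
      fun _ ha s hs => ha (x := ⟨s, hs.2⟩) hs.1
  filter_upwards [(eventually_all_finset Φ).2 fun i _ => hpiece i] with a ha s hs
  obtain ⟨i, hi, hsi⟩ := mem_iUnion₂.1 (hΦ hs)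
  exact ha i hi ⟨hs, hsi⟩

end ClosedCover

theorem isCompact_preimage_comp_pair_of_kspace_general
    {S X Y Z : Type*} [TopologicalSpace S] [T2Space S]
    (hk : ∀ A : Set S, (∀ K : Set S, IsCompact K → IsClosed (A ∩ K)) → IsClosed A)
    {ι : Type*} (Ks : ι → Set S)
    (hKcomp : ∀ i, IsCompact (Ks i))
    (hKlc : ∀ i, LocallyConnectedSpace (Ks i))
    (hKcofinal : ∀ K : Set S, IsCompact K → ∃ Φ : Finset ι, K ⊆ ⋃ i ∈ Φ, Ks i)
    [TopologicalSpace X] [RegularSpace X]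
    [TopologicalSpace Y] [T2Space Y] [TopologicalSpace Z] [T2Space Z]
    (α : X → Y) (hα : IsLocalHomeomorph α)
    (β : X → Z) (hβ : Continuous β)
    (hprop : ∀ C : Set (Y × Z), IsCompact C →
      IsCompact ((fun x : X => (α x, β x)) ⁻¹' C)) :
    ∀ L : Set (C(S, Y) × C(S, Z)), IsCompact L →
      IsCompact ((fun γ : C(S, X) =>
        ((⟨α, hα.continuous⟩ : C(X, Y)).comp γ,
         (⟨β, hβ⟩ : C(X, Z)).comp γ)) ⁻¹' L) := by
  intro L hL
  refine isCompact_iff_ultrafilter_le_nhds'.2 fun 𝒰 h𝒰 => ?_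
  obtain ⟨⟨f, h⟩, hfh, hlim⟩ := hL.ultrafilter_le_nhds' (𝒰.map _) h𝒰
  have hf := (continuous_fst.tendsto _).comp hlim
  have hpt : ∀ s, ∃ x, Tendsto (fun γ : C(S, X) => γ s) 𝒰 (𝓝 x) := fun s => by
    let ev : C(S, Y) × C(S, Z) → Y × Z := fun q => (q.1 s, q.2 s)
    obtain ⟨x, -, hx⟩ := (hprop _ (hL.image (by fun_prop : Continuous ev))).ultrafilter_le_nhds'
      (𝒰.map fun γ : C(S, X) => γ s) (Ultrafilter.mem_map.2 <|
        mem_of_superset h𝒰 fun _ hγ => mem_image_of_mem ev hγ)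
    exact ⟨x, hx⟩
  choose γ₀ hγ₀ using hpt
  have hfγ₀ : ∀ s, f s = α (γ₀ s) := fun s =>
    tendsto_nhds_unique (hf.eval_const s) ((hα.continuous.tendsto _).comp (hγ₀ s))
  have hjoint : ∀ i, ∀ s : Ks i,
      Tendsto (fun p : C(S, X) × Ks i => p.1 p.2) (𝒰 ×ˢ 𝓝 s) (𝓝 (γ₀ s)) := by
    intro i s
    have := isCompact_iff_compactSpace.mp (hKcomp i)
    have := hKlc i
    refine hα.tendsto_uncurry_of_tendsto_comp
      (F := fun γ : C(S, X) => γ.restrict (Ks i)) (hγ₀ s) ?_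
    rw [← hfγ₀]
    exact ((((ContinuousMap.continuous_restrict _).tendsto f).comp hf).comp tendsto_fst).eval
      tendsto_snd
  have hKclosed : ∀ i, IsClosed (Ks i) := fun i => (hKcomp i).isClosed
  have hcont : Continuous γ₀ :=
    continuous_of_forall_continuousOn_of_kspace hk hKclosed hKcofinal fun i =>
      continuousOn_iff_continuous_domRestrict.2
      (continuous_of_tendsto_uncurry (F := fun (γ : C(S, X)) (s : Ks i) => γ s) (hjoint i))
  have htend : Tendsto (fun γ => γ) 𝒰 (𝓝 (⟨γ₀, hcont⟩ : C(S, X))) :=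
    ContinuousMap.tendsto_nhds_of_tendsto_restrict hKclosed hKcofinal fun i =>
      ContinuousMap.tendsto_nhds_of_tendsto_uncurry (hjoint i)
  refine ⟨⟨γ₀, hcont⟩, ?_, htend⟩
  have hlimit := tendsto_nhds_unique (((ContinuousMap.continuous_postcomp _).prodMk
    (ContinuousMap.continuous_postcomp _)).continuousAt.tendsto.comp htend) hlim
  simp only [mem_preimage, hlimit, hfh]

/-- Let `S` be a Hausdorff k-space admitting a cover by compact, locally connected subsets
`K i` such that every compact subset of `S` is contained in a finite union of the `K i`.
Let `X`, `Y`, `Z` be Hausdorff spaces with `X` regular, `α : X → Y` a local homeomorphism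
and `β : X → Z` continuous such that `(α, β) : X → Y × Z` is proper. Then
`g : C(S, X) → C(S, Y) × C(S, Z)`, `γ ↦ (α ∘ γ, β ∘ γ)`, is proper: preimages of
compact sets are compact. -/
theorem isCompact_preimage_comp_pair_of_kspace
    {S X Y Z : Type*} [TopologicalSpace S] [T2Space S]
    (hk : ∀ A : Set S, (∀ K : Set S, IsCompact K → IsClosed (A ∩ K)) → IsClosed A)
    {ι : Type*} (Ks : ι → Set S)
    (hKcomp : ∀ i, IsCompact (Ks i))
    (hKlc : ∀ i, LocallyConnectedSpace (Ks i))
    (hKcov : ⋃ i, Ks i = Set.univ)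
    (hKcofinal : ∀ K : Set S, IsCompact K → ∃ Φ : Finset ι, K ⊆ ⋃ i ∈ Φ, Ks i)
    [TopologicalSpace X] [T2Space X] [RegularSpace X]
    [TopologicalSpace Y] [T2Space Y] [TopologicalSpace Z] [T2Space Z]
    (α : X → Y) (hα : IsLocalHomeomorph α)
    (β : X → Z) (hβ : Continuous β)
    (hprop : ∀ C : Set (Y × Z), IsCompact C →
      IsCompact ((fun x : X => (α x, β x)) ⁻¹' C)) :
    ∀ L : Set (C(S, Y) × C(S, Z)), IsCompact L →
      IsCompact ((fun γ : C(S, X) =>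
        ((⟨α, hα.continuous⟩ : C(X, Y)).comp γ,
         (⟨β, hβ⟩ : C(X, Z)).comp γ)) ⁻¹' L) :=
  isCompact_preimage_comp_pair_of_kspace_general hk Ks hKcomp hKlc hKcofinal α hα β hβ hprop
end

section
/- Let K be a compact, locally connected Hausdorff topological space, let M be a regular Hausdorff topological space, and let N₁ and N₂ be Hausdorff topological spaces. Let f : M → N₁ × N₂ be a continuous proper map (preimages of compact sets are compact) such that the composition pr₁ ∘ f : M → N₁ with the first projection is a local homeomorphism. Then the pushforward C(K,f) : C(K,M) → C(K, N₁ × N₂), γ ↦ f ∘ γ, between spaces of continuous maps with the compact-open topology, is a proper map. -/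
open Set Filter Topology

/-- Let `K` be a compact, locally connected Hausdorff space, `M` a regular Hausdorff space,
`N₁`, `N₂` Hausdorff spaces and `f : M → N₁ × N₂` a continuous proper map such that
`pr₁ ∘ f` is a local homeomorphism. Then the pushforward
`C(K, M) → C(K, N₁ × N₂)`, `γ ↦ f ∘ γ`, is proper: preimages of compact sets are
compact. -/
theorem isCompact_preimage_compContinuousMap_of_proper
    {K M N₁ N₂ : Type*}
    [TopologicalSpace K] [CompactSpace K] [LocallyConnectedSpace K] [T2Space K]
    [TopologicalSpace M] [T2Space M] [RegularSpace M]
    [TopologicalSpace N₁] [T2Space N₁] [TopologicalSpace N₂] [T2Space N₂]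
    (f : M → N₁ × N₂) (hf : Continuous f)
    (hprop : ∀ C : Set (N₁ × N₂), IsCompact C → IsCompact (f ⁻¹' C))
    (hloc : IsLocalHomeomorph (fun x : M => (f x).1)) :
    ∀ L : Set C(K, N₁ × N₂), IsCompact L →
      IsCompact ((fun γ : C(K, M) =>
        (⟨f, hf⟩ : C(M, N₁ × N₂)).comp γ) ⁻¹' L) := by
  intro L hL
  set F : C(K, M) → C(K, N₁ × N₂) :=
    fun γ => (⟨f, hf⟩ : C(M, N₁ × N₂)).comp γ with hFdef
  rw [isCompact_iff_ultrafilter_le_nhds]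
  intro 𝒰 h𝒰
  have hS : (F ⁻¹' L) ∈ 𝒰 := by
    simpa using le_principal_iff.mp h𝒰
  have hFcont : Continuous F := ContinuousMap.continuous_postcomp _
  -- limit u of F along 𝒰
  have hmapL : ↑(𝒰.map F) ≤ 𝓟 L := by
    rw [Ultrafilter.coe_map, le_principal_iff, mem_map]
    exact mem_of_superset hS fun γ hγ => hγ
  obtain ⟨u, huL, hu⟩ := hL.ultrafilter_le_nhds (𝒰.map F) hmapL
  rw [Ultrafilter.coe_map] at hu
  -- the compact set of all values of members of L
  set C : Set (N₁ × N₂) :=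
    (fun p : C(K, N₁ × N₂) × K => p.1 p.2) '' (L ×ˢ univ) with hCdef
  have hC : IsCompact C := (hL.prod isCompact_univ).image continuous_eval
  set Q : Set M := f ⁻¹' C with hQdef
  have hQ : IsCompact Q := hprop C hC
  have hmemQ : ∀ γ ∈ F ⁻¹' L, ∀ k : K, γ k ∈ Q := by
    intro γ hγ k
    refine mem_preimage.mpr ⟨(F γ, k), ⟨hγ, mem_univ k⟩, rfl⟩
  have huC : ∀ k : K, u k ∈ C := fun k => ⟨(u, k), ⟨huL, mem_univ k⟩, rfl⟩
  -- pointwise limits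
  have hptQ : ∀ k : K, ↑(𝒰.map fun γ : C(K, M) => γ k) ≤ 𝓟 Q := by
    intro k
    rw [Ultrafilter.coe_map, le_principal_iff, mem_map]
    exact mem_of_superset hS fun γ hγ => hmemQ γ hγ k
  choose γ₀ hγ₀Q hγ₀ using fun k => hQ.ultrafilter_le_nhds _ (hptQ k)
  simp only [Ultrafilter.coe_map] at hγ₀
  have htend : ∀ k : K, Tendsto (fun γ : C(K, M) => γ k) 𝒰 (𝓝 (γ₀ k)) := hγ₀
  -- f ∘ γ₀ = u
  have hfγ₀ : ∀ k : K, f (γ₀ k) = u k := by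
    intro k
    have h1 : Tendsto (fun γ : C(K, M) => f (γ k)) 𝒰 (𝓝 (f (γ₀ k))) :=
      (hf.tendsto _).comp (htend k)
    have h2 : Tendsto (fun γ : C(K, M) => (F γ) k) 𝒰 (𝓝 (u k)) :=
      ((continuous_eval_const k).tendsto u).comp hu
    exact tendsto_nhds_unique h1 h2
  -- core lemma
  have core : ∀ k₀ : K, ∀ O : Set M, IsOpen O → γ₀ k₀ ∈ O →
      ∃ W : Set K, IsOpen W ∧ k₀ ∈ W ∧ (∀ᶠ γ : C(K, M) in 𝒰, ∀ k ∈ W, γ k ∈ O) ∧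
        ContinuousAt γ₀ k₀ := by
    intro k₀ O hO hx₀O
    obtain ⟨e, hx₀e, he⟩ := hloc (γ₀ k₀)
    have hg : ∀ x : M, (f x).1 = e x := fun x => congrFun he x
    set U : Set M := e.source ∩ O with hUdef
    have hUopen : IsOpen U := e.open_source.inter hO
    have hx₀U : γ₀ k₀ ∈ U := ⟨hx₀e, hx₀O⟩
    -- regular: closed nbhd inside U
    obtain ⟨V', hV'mem, hV'closed, hV'sub⟩ :=
      exists_mem_nhds_isClosed_subset (hUopen.mem_nhds hx₀U)
    set V : Set M := interior V' with hVdef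
    have hVopen : IsOpen V := isOpen_interior
    have hx₀V : γ₀ k₀ ∈ V := mem_interior_iff_mem_nhds.mpr hV'mem
    have hclV : closure V ⊆ U :=
      (closure_minimal interior_subset hV'closed).trans hV'sub
    -- the frontier trap
    set Fr : Set M := Q ∩ (closure V \ V) with hFrdef
    have hFr : IsCompact Fr :=
      hQ.inter_right (isClosed_closure.inter hVopen.isClosed_compl)
    have hfFr : IsClosed (f '' Fr) := (hFr.image hf).isClosed
    have hux₀ : u k₀ ∉ f '' Fr := by
      rintro ⟨x, ⟨hxQ, hxcl, hxV⟩, hfx⟩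
      have hxU : x ∈ U := hclV hxcl
      have hex : e x = e (γ₀ k₀) := by
        rw [← hg x, ← hg (γ₀ k₀), hfx, hfγ₀ k₀]
      have : x = γ₀ k₀ := e.injOn hxU.1 hx₀e hex
      exact hxV (this ▸ hx₀V)
    set Ω : Set (N₁ × N₂) := (f '' Fr)ᶜ with hΩdef
    have hΩopen : IsOpen Ω := hfFr.isOpen_compl
    have huk₀Ω : u k₀ ∈ Ω := hux₀
    -- closed nbhd D of k₀ inside u ⁻¹' Ω, then connected open W inside D
    have hpre : u ⁻¹' Ω ∈ 𝓝 k₀ := u.continuous.continuousAt (hΩopen.mem_nhds huk₀Ω)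
    obtain ⟨D, hDmem, hDclosed, hDsub⟩ := exists_mem_nhds_isClosed_subset hpre
    have hDcomp : IsCompact D := hDclosed.isCompact
    obtain ⟨W, ⟨hWopen, hk₀W, hWconn⟩, hWsub⟩ :=
      (LocallyConnectedSpace.open_connected_basis k₀).mem_iff.mp hDmem
    -- eventual facts
    have hev1 : ∀ᶠ γ : C(K, M) in 𝒰, ∀ k ∈ D, f (γ k) ∈ Ω := by
      have : ∀ᶠ h : C(K, N₁ × N₂) in 𝓝 u, MapsTo h D Ω :=
        (ContinuousMap.isOpen_setOf_mapsTo hDcomp hΩopen).mem_nhds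
          (fun k hk => hDsub hk)
      have hmem : {γ : C(K, M) | MapsTo (F γ) D Ω} ∈ 𝒰 := mem_map.mp (hu this)
      exact Filter.eventually_iff.mpr (mem_of_superset hmem
        fun γ hγ => fun k hk => hγ hk)
    have hev2 : ∀ᶠ γ : C(K, M) in 𝒰, γ k₀ ∈ V :=
      (htend k₀).eventually (hVopen.mem_nhds hx₀V)
    have hev3 : ∀ᶠ γ : C(K, M) in 𝒰, γ ∈ F ⁻¹' L := hS
    have hevW : ∀ᶠ γ : C(K, M) in 𝒰, ∀ k ∈ W, γ k ∈ closure V := by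
      filter_upwards [hev1, hev2, hev3] with γ h1 h2 h3
      by_contra hcon
      push_neg at hcon
      obtain ⟨k₁, hk₁W, hk₁⟩ := hcon
      have hcover : W ⊆ γ ⁻¹' V ∪ γ ⁻¹' (closure V)ᶜ := by
        intro k hk
        rcases em (γ k ∈ closure V) with hcl | hcl
        · rcases em (γ k ∈ V) with hv | hv
          · exact Or.inl hv
          · exfalso
            have : γ k ∈ Fr := ⟨hmemQ γ h3 k, hcl, hv⟩
            exact h1 k (hWsub hk) ⟨γ k, this, rfl⟩
        · exact Or.inr hcl
      have := hWconn.isPreconnected (γ ⁻¹' V) (γ ⁻¹' (closure V)ᶜ)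
        (hVopen.preimage γ.continuous)
        ((isClosed_closure.preimage γ.continuous).isOpen_compl) hcover
        ⟨k₀, hk₀W, h2⟩ ⟨k₁, hk₁W, hk₁⟩
      obtain ⟨k₂, _, hk₂V, hk₂cl⟩ := this
      exact hk₂cl (subset_closure hk₂V)
    -- γ₀ maps W into closure V
    have hγ₀W : ∀ k ∈ W, γ₀ k ∈ closure V := by
      intro k hk
      exact isClosed_closure.mem_of_tendsto (htend k)
        (hevW.mono fun γ hγ => hγ k hk)
    -- continuity at k₀
    have hcontAt : ContinuousAt γ₀ k₀ := by
      have hsymm : ContinuousAt (fun k : K => e.symm (u k).1) k₀ := by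
        have h1 : (u k₀).1 ∈ e.target := by
          rw [← hfγ₀ k₀, hg (γ₀ k₀)]
          exact e.map_source hx₀e
        have hin : ContinuousAt (fun k : K => (u k).1) k₀ :=
          (continuous_fst.comp u.continuous).continuousAt
        exact ContinuousAt.comp (e.continuousAt_symm h1) hin
      refine hsymm.congr ?_
      filter_upwards [hWopen.mem_nhds hk₀W] with k hk
      have hkU : γ₀ k ∈ U := hclV (hγ₀W k hk)
      rw [← hfγ₀ k, hg (γ₀ k), e.left_inv hkU.1]
    refine ⟨W, hWopen, hk₀W, ?_, hcontAt⟩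
    exact hevW.mono fun γ hγ k hk => ((hclV (hγ k hk)).2)
  -- γ₀ is continuous
  have hcont : Continuous γ₀ := by
    rw [continuous_iff_continuousAt]
    intro k₀
    obtain ⟨_, _, _, _, h⟩ := core k₀ univ isOpen_univ (mem_univ _)
    exact h
  set Γ : C(K, M) := ⟨γ₀, hcont⟩ with hΓdef
  have hFΓ : F Γ = u := ContinuousMap.ext fun k => hfγ₀ k
  refine ⟨Γ, mem_preimage.mpr (show F Γ ∈ L from hFΓ ▸ huL), ?_⟩
  -- convergence 𝒰 → Γ in the compact-open topology
  rw [show (↑𝒰 ≤ 𝓝 Γ) ↔ Tendsto id (↑𝒰) (𝓝 Γ) from tendsto_id'.symm,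
    ContinuousMap.tendsto_nhds_compactOpen]
  intro D hD O hO hmaps
  have hcov : ∀ k ∈ D, ∃ W : Set K, IsOpen W ∧ k ∈ W ∧
      (∀ᶠ γ : C(K, M) in 𝒰, ∀ k' ∈ W, γ k' ∈ O) := by
    intro k hk
    obtain ⟨W, hWopen, hkW, hevW, _⟩ := core k O hO (hmaps hk)
    exact ⟨W, hWopen, hkW, hevW⟩
  choose! W hWopen hkW hevW using hcov
  obtain ⟨t, htD, htcov⟩ := hD.elim_nhds_subcover W
    (fun k hk => (hWopen k hk).mem_nhds (hkW k hk))
  have : ∀ᶠ γ : C(K, M) in 𝒰, ∀ k ∈ t, ∀ k' ∈ W k, γ k' ∈ O := by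
    rw [Filter.eventually_all_finset]
    intro k hk
    exact hevW k (htD k hk)
  exact this.mono fun γ hγ k' hk' => by
    obtain ⟨k, hkt, hk'W⟩ := mem_iUnion₂.mp (htcov hk')
    exact hγ k hkt k' hk'W
end

section
/- Let E be a real Banach space, W ⊆ E an open subset, and Q ⊆ E × E an open subset with W × {0} ⊆ Q. Let g : E × E → E be a map which is smooth (C^∞) on Q, and suppose the map f : Q → E × E, f(x,y) = (x, g(x,y)), is injective on Q, has open image f(Q), and has a smooth inverse, i.e. there is a map h : E × E → E × E which is smooth on f(Q) with h(f(x,y)) = (x,y) for all (x,y) ∈ Q and f(h(u,v)) = (u,v) for all (u,v) ∈ f(Q). For x ∈ W, let β_x : E → E be the Fréchet derivative at 0 of the map y ↦ g(x,y). Then for each x ∈ W the continuous linear map β_x is bijective, and there exists a map B assigning to each x ∈ W a continuous linear map B(x) : E → E with B(x) ∘ β_x = id_E and β_x ∘ B(x) = id_E, such that the map W × E → E, (x,z) ↦ B(x)(z), is smooth. -/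
/-- Let `E` be a real Banach space, `W ⊆ E` open, `Q ⊆ E × E` open with `W × {0} ⊆ Q`.
Let `g` be smooth on `Q` and suppose `f : (x, y) ↦ (x, g (x, y))` is injective on `Q`,
has open image, and admits a smooth inverse `h` on `f '' Q`. For `x ∈ W` let `β_x` be the
Fréchet derivative at `0` of `y ↦ g (x, y)`. Then each `β_x` is bijective, and there is an
assignment `B` of continuous linear inverses of the `β_x` such that `(x, z) ↦ B x z` is
smooth on `W × E`. -/
theorem smooth_inverse_of_partial_derivative
    {E : Type*} [NormedAddCommGroup E] [NormedSpace ℝ E] [CompleteSpace E]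
    (W : Set E) (hW : IsOpen W)
    (Q : Set (E × E)) (hQ : IsOpen Q) (hWQ : W ×ˢ ({0} : Set E) ⊆ Q)
    (g : E × E → E) (hg : ContDiffOn ℝ (⊤ : ℕ∞) g Q)
    (hinj : Set.InjOn (fun p : E × E => (p.1, g p)) Q)
    (hopen : IsOpen ((fun p : E × E => (p.1, g p)) '' Q))
    (h : E × E → E × E)
    (hh : ContDiffOn ℝ (⊤ : ℕ∞) h ((fun p : E × E => (p.1, g p)) '' Q))
    (hleft : ∀ p ∈ Q, h (p.1, g p) = p)
    (hright : ∀ u ∈ (fun p : E × E => (p.1, g p)) '' Q, ((h u).1, g (h u)) = u) :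
    (∀ x ∈ W, Function.Bijective (fderiv ℝ (fun y : E => g (x, y)) 0)) ∧
    ∃ B : E → E →L[ℝ] E,
      (∀ x ∈ W,
        (B x).comp (fderiv ℝ (fun y : E => g (x, y)) 0) = ContinuousLinearMap.id ℝ E ∧
        (fderiv ℝ (fun y : E => g (x, y)) 0).comp (B x) = ContinuousLinearMap.id ℝ E) ∧
      ContDiffOn ℝ (⊤ : ℕ∞) (fun p : E × E => B p.1 p.2)
        (W ×ˢ (Set.univ : Set E)) := by
  set f : E × E → E × E := fun p => (p.1, g p) with hfdef
  have hQ' : ∀ x ∈ W, ((x, (0 : E)) : E × E) ∈ Q := fun x hx => hWQ ⟨hx, rfl⟩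
  have hgdiff : ∀ p ∈ Q, DifferentiableAt ℝ g p := fun p hp =>
    ((hg.contDiffAt (hQ.mem_nhds hp)).differentiableAt (by simp))
  have hhdiff : ∀ u ∈ f '' Q, DifferentiableAt ℝ h u := fun u hu =>
    ((hh.contDiffAt (hopen.mem_nhds hu)).differentiableAt (by simp))
  have hfD : ∀ p ∈ Q, HasFDerivAt f
      ((ContinuousLinearMap.fst ℝ E E).prod (fderiv ℝ g p)) p := fun p hp =>
    (hasFDerivAt_fst).prodMk (hgdiff p hp).hasFDerivAt
  -- the candidate inverse
  set B : E → E →L[ℝ] E := fun x =>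
    (ContinuousLinearMap.snd ℝ E E).comp
      ((fderiv ℝ h (x, g (x, 0))).comp (ContinuousLinearMap.inr ℝ E E)) with hBdef
  -- key facts for x ∈ W
  have key : ∀ x ∈ W,
      (B x).comp (fderiv ℝ (fun y : E => g (x, y)) 0) = ContinuousLinearMap.id ℝ E ∧
      (fderiv ℝ (fun y : E => g (x, y)) 0).comp (B x) = ContinuousLinearMap.id ℝ E := by
    intro x hx
    have hx0 : ((x, (0 : E)) : E × E) ∈ Q := hQ' x hx
    have himg : f (x, 0) ∈ f '' Q := ⟨(x, 0), hx0, rfl⟩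
    set Dg := fderiv ℝ g (x, (0 : E)) with hDg
    set Df := (ContinuousLinearMap.fst ℝ E E).prod Dg with hDf
    set Dh := fderiv ℝ h (f (x, 0)) with hDh
    -- partial derivative
    have hβ : fderiv ℝ (fun y : E => g (x, y)) 0 =
        Dg.comp (ContinuousLinearMap.inr ℝ E E) := by
      have h1 : HasFDerivAt (fun y : E => ((x, y) : E × E))
          (ContinuousLinearMap.inr ℝ E E) 0 :=
        (hasFDerivAt_const x 0).prodMk (hasFDerivAt_id 0)
      exact ((hgdiff _ hx0).hasFDerivAt.comp 0 h1).fderiv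
    have hfderiv : fderiv ℝ f (x, 0) = Df := (hfD _ hx0).fderiv
    -- chain rule 1 : Dh ∘ Df = id
    have key1 : Dh.comp Df = ContinuousLinearMap.id ℝ (E × E) := by
      have heq : (fun p => h (f p)) =ᶠ[nhds ((x, (0:E)) : E × E)] id :=
        Filter.eventually_of_mem (hQ.mem_nhds hx0) (fun p hp => hleft p hp)
      have hcomp : fderiv ℝ (h ∘ f) (x, 0) = Dh.comp (fderiv ℝ f (x, 0)) :=
        fderiv_comp _ (hhdiff _ himg) (hfD _ hx0).differentiableAt
      have := heq.fderiv_eq (𝕜 := ℝ)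
      rw [fderiv_id] at this
      rw [← hfderiv, ← hcomp]
      exact this
    -- chain rule 2 : Df ∘ Dh = id
    have key2 : Df.comp Dh = ContinuousLinearMap.id ℝ (E × E) := by
      have heq : (fun u => f (h u)) =ᶠ[nhds (f (x, (0:E)))] id :=
        Filter.eventually_of_mem (hopen.mem_nhds himg) (fun u hu => hright u hu)
      have hhf : h (f (x, 0)) = (x, 0) := hleft _ hx0
      have hcomp : fderiv ℝ (f ∘ h) (f (x, 0)) =
          (fderiv ℝ f (h (f (x, 0)))).comp Dh :=
        fderiv_comp _ (by rw [hhf]; exact (hfD _ hx0).differentiableAt) (hhdiff _ himg)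
      have := heq.fderiv_eq (𝕜 := ℝ)
      rw [fderiv_id] at this
      rw [← this, show (fun u => f (h u)) = f ∘ h from rfl, hcomp, hhf, hfderiv]
    constructor
    · ext v
      have := DFunLike.congr_fun key1 ((0 : E), v)
      simp only [ContinuousLinearMap.comp_apply, ContinuousLinearMap.id_apply] at this ⊢
      rw [hβ, hBdef]
      simp only [ContinuousLinearMap.comp_apply, ContinuousLinearMap.inr_apply,
        ContinuousLinearMap.coe_snd']
      have hDfv : Df ((0 : E), v) = ((0 : E), Dg (0, v)) := by
        simp [hDf, ContinuousLinearMap.prod_apply]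
      rw [hDfv] at this
      have : Dh ((0:E), Dg (0, v)) = ((0:E), v) := this
      show (fderiv ℝ h (x, g (x, 0)) (0, Dg (0, v))).2 = v
      have hfx : f (x, (0:E)) = (x, g (x, 0)) := rfl
      rw [← hfx, ← hDh, this]
    · ext z
      have := DFunLike.congr_fun key2 ((0 : E), z)
      simp only [ContinuousLinearMap.comp_apply, ContinuousLinearMap.id_apply] at this
      -- this : Df (Dh (0, z)) = (0, z)
      have h1 : (Dh ((0:E), z)).1 = 0 := by
        have := congrArg Prod.fst this
        simpa [hDf, ContinuousLinearMap.prod_apply] using this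
      have h2 : Dg (Dh ((0:E), z)) = z := by
        have := congrArg Prod.snd this
        simpa [hDf, ContinuousLinearMap.prod_apply] using this
      rw [hβ, hBdef]
      simp only [ContinuousLinearMap.comp_apply, ContinuousLinearMap.inr_apply,
        ContinuousLinearMap.coe_snd', ContinuousLinearMap.id_apply]
      show Dg ((0:E), (fderiv ℝ h (x, g (x,0)) ((0:E), z)).2) = z
      have hfx : f (x, (0:E)) = (x, g (x, 0)) := rfl
      rw [← hfx, ← hDh]
      have hpair : ((0:E), (Dh ((0:E), z)).2) = Dh ((0:E), z) := by
        ext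
        · exact h1.symm
        · rfl
      rw [hpair, h2]
  refine ⟨?_, B, key, ?_⟩
  · intro x hx
    obtain ⟨hl, hr⟩ := key x hx
    constructor
    · intro a b hab
      have := congrArg (B x) hab
      simpa using
        (DFunLike.congr_fun hl a).symm.trans (this.trans (DFunLike.congr_fun hl b))
    · intro z
      exact ⟨B x z, DFunLike.congr_fun hr z⟩
  · -- smoothness
    have hψ : ContDiffOn ℝ (⊤ : ℕ∞) (fun x : E => ((x, g (x, 0)) : E × E)) W := by
      refine contDiffOn_id.prodMk ?_
      exact hg.comp ((contDiff_id.prodMk contDiff_const).contDiffOn)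
        (fun x hx => hQ' x hx)
    have himg : Set.MapsTo (fun x : E => ((x, g (x, 0)) : E × E)) W (f '' Q) :=
      fun x hx => ⟨(x, 0), hQ' x hx, rfl⟩
    have hDh : ContDiffOn ℝ (⊤ : ℕ∞) (fun u => fderiv ℝ h u) (f '' Q) :=
      hh.fderiv_of_isOpen hopen (by exact_mod_cast le_top)
    have hφ : ContDiffOn ℝ (⊤ : ℕ∞) (fun x : E => fderiv ℝ h (x, g (x, 0))) W :=
      hDh.comp hψ himg
    have hmain : ContDiffOn ℝ (⊤ : ℕ∞)
        (fun p : E × E => fderiv ℝ h (p.1, g (p.1, 0)) ((0 : E), p.2))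
        (W ×ˢ (Set.univ : Set E)) := by
      refine ContDiffOn.clm_apply ?_ ?_
      · exact hφ.comp contDiffOn_fst (fun p hp => hp.1)
      · exact (contDiff_const.prodMk contDiff_snd).contDiffOn
    have : ContDiffOn ℝ (⊤ : ℕ∞)
        (fun p : E × E => (fderiv ℝ h (p.1, g (p.1, 0)) ((0 : E), p.2)).2)
        (W ×ˢ (Set.univ : Set E)) := contDiff_snd.comp_contDiffOn hmain
    exact this
end
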